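/- arXiv:1011.6459 — 4 statements merged into one kernel-verified Lean document; each statement's English description precedes it below -/
import Mathlib

section
/- For every natural number g ≥ 1, (1/2)·C(2g+2, g+1) + Σ_{m ≥ 2, m even} C(2g+2, g+1−2m) = 2^(2g−1) + 2^(g−1), where the sum runs over even m with 2 ≤ m ≤ ⌊(g+1)/2⌋. Equivalently, C(2g+2, g+1) + 2·Σ_{m even ≥ 2} C(2g+2, g+1−2m) = 2^(2g) + 2^g. -/
open Finset


private def chi (k : ℕ) : ℤ := if k % 4 = 0 then 1 else if k % 4 = 2 then -1 else 0

private lemma chi_add_two (k : ℕ) : chi (k + 2) = - chi k := by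
  have h : k % 4 = 0 ∨ k % 4 = 1 ∨ k % 4 = 2 ∨ k % 4 = 3 := by omega
  rcases h with h | h | h | h <;>
    simp [chi, h, show (k+2) % 4 = (k % 4 + 2) % 4 by omega]

private def Sa (n s : ℕ) : ℤ := ∑ j ∈ range (n+1), chi (j + s) * (Nat.choose n j : ℤ)

private lemma Sa_zero (s : ℕ) : Sa 0 s = chi s := by simp [Sa]

private lemma Sa_succ (n s : ℕ) : Sa (n+1) s = Sa n s + Sa n (s+1) := by
  have e : ∀ j : ℕ, j + 1 + s = j + (s+1) := fun j => by omega
  have h0 : ∑ j ∈ range (n+2), chi (j+s) * (Nat.choose n j : ℤ) = Sa n s := by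
    rw [Finset.sum_range_succ]
    simp [Sa]
  have h1 : ∑ j ∈ range (n+2), chi (j+s) * (Nat.choose n j : ℤ)
      = ∑ j ∈ range (n+1), chi (j+1+s) * (Nat.choose n (j+1) : ℤ) + chi s := by
    rw [Finset.sum_range_succ' (fun j => chi (j+s) * (Nat.choose n j : ℤ)) (n+1)]
    simp
  have key : ∑ j ∈ range (n+1), chi (j+1+s) * (Nat.choose n (j+1) : ℤ) = Sa n s - chi s := by
    rw [h1] at h0; linarith
  calc Sa (n+1) s
      = ∑ j ∈ range (n+1), chi (j+1+s) * (Nat.choose (n+1) (j+1) : ℤ) + chi s := by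
        rw [Sa, Finset.sum_range_succ' _ (n+1)]; simp
    _ = (∑ j ∈ range (n+1), chi (j+1+s) * (Nat.choose n j : ℤ))
        + (∑ j ∈ range (n+1), chi (j+1+s) * (Nat.choose n (j+1) : ℤ)) + chi s := by
        rw [← Finset.sum_add_distrib]
        congr 1
        apply Finset.sum_congr rfl
        intro j _
        rw [Nat.choose_succ_succ]; push_cast; ring
    _ = Sa n (s+1) + (Sa n s - chi s) + chi s := by
        rw [key]
        congr 1
        simp only [Sa, e]
    _ = Sa n s + Sa n (s+1) := by ring

private lemma Sa_add_two (n s : ℕ) : Sa n (s+2) = - Sa n s := by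
  have e : ∀ j : ℕ, j + (s+2) = (j + s) + 2 := fun j => by omega
  simp only [Sa, e, chi_add_two, neg_mul, Finset.sum_neg_distrib]

private lemma Sa_two_mul (g s : ℕ) : Sa (2*g) s = 2^g * chi (s + g) := by
  induction g generalizing s with
  | zero => simp [Sa_zero]
  | succ g ih =>
    have h : 2*(g+1) = (2*g+1) + 1 := by ring
    rw [h, Sa_succ, Sa_succ, Sa_succ, Sa_add_two, ih, ih]
    rw [show s + 1 + g = s + (g+1) by omega]
    ring

private lemma point (c j x : ℕ) :
    (4 : ℤ) * (if j % 4 = c % 4 then (x : ℤ) else 0)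
      = (1 + (-1)^(j+c) + 2 * chi (j + 3*c)) * x := by
  have hpm : ((-1:ℤ))^(j+3*c) = (-1)^(j+c) := by
    rw [show j+3*c = (j+c) + 2*c by ring, pow_add, pow_mul]
    norm_num
  rw [← hpm]
  have h : (j+3*c) % 4 = 0 ∨ (j+3*c) % 4 = 1 ∨ (j+3*c) % 4 = 2 ∨ (j+3*c) % 4 = 3 := by omega
  rcases h with h | h | h | h
  · have hc : j % 4 = c % 4 := by omega
    have he : Even (j + 3*c) := by rw [Nat.even_iff]; omega
    simp [chi, h, hc, he.neg_one_pow]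
  · have hc : ¬ (j % 4 = c % 4) := by omega
    have he : Odd (j + 3*c) := by rw [Nat.odd_iff]; omega
    simp [chi, h, hc, he.neg_one_pow]
  · have hc : ¬ (j % 4 = c % 4) := by omega
    have he : Even (j + 3*c) := by rw [Nat.even_iff]; omega
    simp [chi, h, hc, he.neg_one_pow]
  · have hc : ¬ (j % 4 = c % 4) := by omega
    have he : Odd (j + 3*c) := by rw [Nat.odd_iff]; omega
    simp [chi, h, hc, he.neg_one_pow]

private lemma class_sum (g : ℕ) :
    ∑ j ∈ range (2*g+3), (if j % 4 = (g+1) % 4 then Nat.choose (2*g+2) j else 0)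
      = 2^(2*g) + 2^g := by
  have hZ : (4:ℤ) * ∑ j ∈ range (2*g+3),
      (if j % 4 = (g+1) % 4 then (Nat.choose (2*g+2) j : ℤ) else 0)
      = 4 * (2^(2*g) + 2^g) := by
    rw [Finset.mul_sum]
    have hpt : ∀ j ∈ range (2*g+3),
        (4:ℤ) * (if j % 4 = (g+1) % 4 then (Nat.choose (2*g+2) j : ℤ) else 0)
        = (Nat.choose (2*g+2) j : ℤ)
          + (-1)^(g+1) * ((-1)^j * (Nat.choose (2*g+2) j : ℤ))
          + 2 * (chi (j + 3*(g+1)) * (Nat.choose (2*g+2) j : ℤ)) := by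
      intro j _
      rw [point (g+1) j]
      have : ((-1:ℤ))^(j+(g+1)) = (-1)^(g+1) * (-1)^j := by rw [pow_add]; ring
      rw [this]; ring
    rw [Finset.sum_congr rfl hpt]
    rw [Finset.sum_add_distrib, Finset.sum_add_distrib, ← Finset.mul_sum, ← Finset.mul_sum]
    have h1 : ∑ j ∈ range (2*g+3), (Nat.choose (2*g+2) j : ℤ) = 2^(2*g+2) := by
      have := Nat.sum_range_choose (2*g+2)
      have := congrArg (Nat.cast : ℕ → ℤ) this
      push_cast at this
      convert this using 2
    have h2 : ∑ j ∈ range (2*g+3), ((-1:ℤ))^j * (Nat.choose (2*g+2) j : ℤ) = 0 := by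
      have := Int.alternating_sum_range_choose (n := 2*g+2)
      simp only [show 2*g+2 ≠ 0 by omega, if_false] at this
      convert this using 2
    have h3 : ∑ j ∈ range (2*g+3), chi (j + 3*(g+1)) * (Nat.choose (2*g+2) j : ℤ)
        = 2^(g+1) := by
      have hs := Sa_two_mul (g+1) (3*(g+1))
      rw [show 2*(g+1) = 2*g+2 by ring] at hs
      rw [show Sa (2*g+2) (3*(g+1)) = ∑ j ∈ range (2*g+2+1),
        chi (j + 3*(g+1)) * (Nat.choose (2*g+2) j : ℤ) from rfl] at hs
      rw [show 2*g+3 = 2*g+2+1 by ring, hs, show 3*(g+1)+(g+1) = 4*(g+1) by ring]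
      simp [chi, Nat.mul_mod_right]
    rw [h1, h2, h3]; ring
  have hN : ((∑ j ∈ range (2*g+3), (if j % 4 = (g+1) % 4 then Nat.choose (2*g+2) j else 0) : ℕ) : ℤ)
      = ((2^(2*g) + 2^g : ℕ) : ℤ) := by
    push_cast
    have h4 : (4:ℤ) ≠ 0 := by norm_num
    apply mul_left_cancel₀ h4
    rw [hZ]
  exact Nat.cast_injective hN

private lemma lower_sum (g : ℕ) :
    ∑ m ∈ (Finset.Icc 2 ((g + 1) / 2)).filter (fun m => Even m),
        Nat.choose (2 * g + 2) (g + 1 - 2 * m)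
    = ∑ j ∈ range (g+1), (if j % 4 = (g+1) % 4 then Nat.choose (2*g+2) j else 0) := by
  rw [← Finset.sum_filter]
  apply Finset.sum_nbij' (i := fun m => g + 1 - 2*m) (j := fun j => (g + 1 - j) / 2)
  · intro m hm
    simp only [Finset.mem_filter, Finset.mem_Icc, Nat.even_iff] at hm
    simp only [Finset.mem_filter, Finset.mem_range]
    omega
  · intro j hj
    simp only [Finset.mem_filter, Finset.mem_range] at hj
    simp only [Finset.mem_filter, Finset.mem_Icc, Nat.even_iff]
    omega
  · intro m hm
    simp only [Finset.mem_filter, Finset.mem_Icc, Nat.even_iff] at hm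
    omega
  · intro j hj
    simp only [Finset.mem_filter, Finset.mem_range] at hj
    omega
  · intro m hm
    rfl

private lemma class_split (g : ℕ) :
    ∑ j ∈ range (2*g+3), (if j % 4 = (g+1) % 4 then Nat.choose (2*g+2) j else 0)
    = Nat.choose (2*g+2) (g+1)
      + 2 * ∑ j ∈ range (g+1), (if j % 4 = (g+1) % 4 then Nat.choose (2*g+2) j else 0) := by
  set f : ℕ → ℕ := fun j => if j % 4 = (g+1) % 4 then Nat.choose (2*g+2) j else 0 with hf
  have h1 : ∑ j ∈ range (2*g+3), f j
      = ∑ j ∈ Finset.Ico 0 (g+1), f j + ∑ j ∈ Finset.Ico (g+1) (2*g+3), f j := by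
    rw [Finset.range_eq_Ico, ← Finset.sum_Ico_consecutive] <;> omega
  have h2 : ∑ j ∈ Finset.Ico (g+1) (2*g+3), f j
      = f (g+1) + ∑ j ∈ Finset.Ico (g+2) (2*g+3), f j := by
    rw [Finset.sum_eq_sum_Ico_succ_bot (by omega)]
  have h3 : ∑ j ∈ Finset.Ico (g+2) (2*g+3), f j = ∑ j ∈ Finset.Ico 0 (g+1), f j := by
    apply Finset.sum_nbij' (i := fun j => 2*g+2 - j) (j := fun j => 2*g+2 - j)
    · intro j hj; simp only [Finset.mem_Ico] at *; omega
    · intro j hj; simp only [Finset.mem_Ico] at *; omega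
    · intro j hj; simp only [Finset.mem_Ico] at hj; omega
    · intro j hj; simp only [Finset.mem_Ico] at hj; omega
    · intro j hj
      simp only [Finset.mem_Ico] at hj
      have hsym : Nat.choose (2*g+2) (2*g+2 - j) = Nat.choose (2*g+2) j :=
        Nat.choose_symm (by omega)
      have hcond : (2*g+2 - j) % 4 = (g+1) % 4 ↔ j % 4 = (g+1) % 4 := by omega
      simp only [hf]
      by_cases h : j % 4 = (g+1) % 4
      · rw [if_pos h, if_pos (hcond.mpr h), hsym]
      · rw [if_neg h, if_neg (fun hc => h (hcond.mp hc))]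
  have hfc : f (g+1) = Nat.choose (2*g+2) (g+1) := by simp [hf]
  rw [h1, h2, h3, hfc, Finset.range_eq_Ico]
  ring

theorem partitions_count_even (g : ℕ) (hg : 1 ≤ g) :
    Nat.choose (2 * g + 2) (g + 1) +
      2 * ∑ m ∈ (Finset.Icc 2 ((g + 1) / 2)).filter (fun m => Even m),
        Nat.choose (2 * g + 2) (g + 1 - 2 * m) =
    2 ^ (2 * g) + 2 ^ g := by
  rw [lower_sum, ← class_split, class_sum]
end

section
/- For every natural number g ≥ 1, Σ_{m ≥ 1, m odd} C(2g+2, g+1−2m) = 2^(2g−1) − 2^(g−1), where the sum runs over odd m with 1 ≤ m ≤ ⌊(g+1)/2⌋. -/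
/-!
With `N = g + 1`, the indices `N - 2m` and `N + 2m` for odd `m` are exactly the `j ∈ [0, 2N]`
with `j ≡ N + 2 (mod 4)`, written `4 ∣ j + (3N + 2)`, and `C(2N, N - 2m) = C(2N, N + 2m)`; so
twice the sum is the sum of `C(2N, j)` over that residue class. The roots-of-unity filter with
`ω = i` evaluates it: `(1 + i)^(2N) = (2i)^N` and `(1 - i)^(2N) = (-2i)^N` contribute `-2^N`
each and `(1 - 1)^(2N) = 0`, so four times the class sum is `4^N - 2 · 2^N`.
-/

open Finset

section RootOfUnityFilter

variable {R : Type*} [CommRing R] {ω : R}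

theorem sum_range_four_pow_mul_eq_ite (hω : ω ^ 2 = -1) (k : ℕ) :
    ∑ t ∈ range 4, ω ^ (t * k) = if 4 ∣ k then 4 else 0 := by
  have hω4 : ω ^ 4 = 1 := by linear_combination (ω ^ 2 - 1) * hω
  simp only [sum_range_succ, sum_range_zero, pow_mul', pow_eq_pow_mod k hω4,
    Nat.dvd_iff_mod_eq_zero]
  have hk : k % 4 < 4 := Nat.mod_lt k (by norm_num)
  interval_cases k % 4
  · norm_num
  · norm_num; linear_combination (1 + ω) * hω
  · norm_num; linear_combination (1 + ω ^ 4) * hω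
  · norm_num; linear_combination (1 + ω ^ 3) * (1 - ω ^ 2 + ω ^ 4) * hω

theorem four_mul_sum_choose_filter_four_dvd (hω : ω ^ 2 = -1) (n c : ℕ) :
    4 * ∑ j ∈ (range (n + 1)).filter (fun j => 4 ∣ j + c), (n.choose j : R) =
      ∑ t ∈ range 4, ω ^ (t * c) * (1 + ω ^ t) ^ n := by
  calc 4 * ∑ j ∈ (range (n + 1)).filter (fun j => 4 ∣ j + c), (n.choose j : R)
      = ∑ j ∈ range (n + 1), (n.choose j : R) * ∑ t ∈ range 4, ω ^ (t * (j + c)) := by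
        simp only [sum_filter, mul_sum, sum_range_four_pow_mul_eq_ite hω]
        refine sum_congr rfl fun j _ => ?_
        split_ifs <;> ring
    _ = ∑ t ∈ range 4,
          ω ^ (t * c) * ∑ j ∈ range (n + 1), (ω ^ t) ^ j * 1 ^ (n - j) * n.choose j := by
        simp only [mul_sum]
        rw [sum_comm]
        refine sum_congr rfl fun t _ => sum_congr rfl fun j _ => ?_
        ring
    _ = ∑ t ∈ range 4, ω ^ (t * c) * (1 + ω ^ t) ^ n := by
        simp only [add_comm (1 : R), add_pow]

theorem sum_range_four_pow_mul_one_add_pow_eq (hω : ω ^ 2 = -1) {N : ℕ} (hN : 0 < N) :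
    ∑ t ∈ range 4, ω ^ (t * (3 * N + 2)) * (1 + ω ^ t) ^ (2 * N) = 4 ^ N - 2 * 2 ^ N := by
  have h1 : ω ^ (3 * N + 2) * (1 + ω) ^ (2 * N) = -2 ^ N := by
    calc ω ^ (3 * N + 2) * (1 + ω) ^ (2 * N)
        = 2 ^ N * (ω ^ 2) ^ (2 * N + 1) := by
          rw [pow_mul, show (1 + ω) ^ 2 = 2 * ω by linear_combination hω]
          ring
      _ = -2 ^ N := by rw [hω, (odd_two_mul_add_one N).neg_one_pow]; ring
  have h2 : (1 + ω ^ 2) ^ (2 * N) = 0 := by rw [hω, add_neg_cancel, zero_pow (by omega)]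
  have h3 : ω ^ (3 * (3 * N + 2)) * (1 + ω ^ 3) ^ (2 * N) = -2 ^ N := by
    calc ω ^ (3 * (3 * N + 2)) * (1 + ω ^ 3) ^ (2 * N)
        = 2 ^ N * (ω ^ 2) ^ (6 * N + 3) := by
          rw [pow_mul (1 + ω ^ 3),
            show (1 + ω ^ 3) ^ 2 = 2 * ω ^ 3 by linear_combination (ω ^ 4 - ω ^ 2 + 1) * hω]
          ring
      _ = -2 ^ N := by
          rw [hω, (show Odd (6 * N + 3) from ⟨3 * N + 1, by ring⟩).neg_one_pow]
          ring
  simp only [sum_range_succ, sum_range_zero, one_mul, pow_one, h1, h2, h3]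
  rw [show (4 : R) ^ N = 2 ^ (2 * N) by rw [pow_mul]; norm_num]
  ring

end RootOfUnityFilter

theorem four_mul_sum_choose_filter_add_two_mul_two_pow {N : ℕ} (hN : 0 < N) :
    4 * ∑ j ∈ (range (2 * N + 1)).filter (fun j => 4 ∣ j + (3 * N + 2)), (2 * N).choose j
      + 2 * 2 ^ N = 4 ^ N := by
  have h := four_mul_sum_choose_filter_four_dvd Complex.I_sq (2 * N) (3 * N + 2)
  rw [sum_range_four_pow_mul_one_add_pow_eq Complex.I_sq hN] at h
  exact_mod_cast (eq_sub_iff_add_eq.mp h)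

theorem sum_range_two_mul_add_one_of_symm {M : Type*} [AddCommMonoid M] (N : ℕ) (f : ℕ → M)
    (hf : ∀ j ≤ 2 * N, f (2 * N - j) = f j) :
    ∑ j ∈ range (2 * N + 1), f j = f N + 2 • ∑ j ∈ range N, f j := by
  have hright : ∑ j ∈ range N, f (N + 1 + j) = ∑ j ∈ range N, f j := by
    rw [← sum_range_reflect f N]
    refine sum_congr rfl fun j hj => ?_
    have hj := mem_range.mp hj
    rw [← hf (N + 1 + j) (by omega)]
    congr 1
    omega
  rw [show 2 * N + 1 = N + 1 + N by ring, sum_range_add, sum_range_succ, hright]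
  abel

theorem sum_choose_filter_odd_eq_sum_filter_range (N : ℕ) :
    ∑ m ∈ (Icc 1 (N / 2)).filter (fun m => Odd m), (2 * N).choose (N - 2 * m) =
      ∑ j ∈ (range N).filter (fun j => 4 ∣ j + (3 * N + 2)), (2 * N).choose j := by
  refine sum_nbij' (fun m => N - 2 * m) (fun j => (N - j) / 2) ?_ ?_ ?_ ?_ fun _ _ => rfl <;>
    intro x hx <;> simp only [mem_filter, mem_Icc, Nat.odd_iff, mem_range] at hx ⊢ <;>
    omega

theorem two_mul_sum_choose_filter_odd (N : ℕ) :
    2 * ∑ m ∈ (Icc 1 (N / 2)).filter (fun m => Odd m), (2 * N).choose (N - 2 * m) =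
      ∑ j ∈ (range (2 * N + 1)).filter (fun j => 4 ∣ j + (3 * N + 2)), (2 * N).choose j := by
  have hsymm : ∀ j ≤ 2 * N, (if 4 ∣ (2 * N - j) + (3 * N + 2) then (2 * N).choose (2 * N - j)
      else 0) = if 4 ∣ j + (3 * N + 2) then (2 * N).choose j else 0 := by
    intro j hj
    rw [Nat.choose_symm hj]
    exact if_congr (by omega) rfl rfl
  rw [sum_choose_filter_odd_eq_sum_filter_range, sum_filter, sum_filter,
    sum_range_two_mul_add_one_of_symm N _ hsymm, if_neg (by omega), smul_eq_mul, zero_add]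

theorem partitions_count_odd_general (g : ℕ) :
    ∑ m ∈ (Finset.Icc 1 ((g + 1) / 2)).filter (fun m => Odd m),
        Nat.choose (2 * g + 2) (g + 1 - 2 * m) =
    2 ^ (2 * g - 1) - 2 ^ (g - 1) := by
  have hcount := four_mul_sum_choose_filter_add_two_mul_two_pow (N := g + 1) (by omega)
  rw [← two_mul_sum_choose_filter_odd, show 2 * (g + 1) = 2 * g + 2 by ring] at hcount
  rcases g with _ | k
  · simp
  · simp only [pow_succ, show 2 * (k + 1) - 1 = 2 * k + 1 by omega, Nat.add_sub_cancel,
      pow_mul, show (2 : ℕ) ^ 2 = 4 by norm_num] at hcount ⊢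
    omega

theorem partitions_count_odd (g : ℕ) (hg : 1 ≤ g) :
    ∑ m ∈ (Finset.Icc 1 ((g + 1) / 2)).filter (fun m => Odd m),
        Nat.choose (2 * g + 2) (g + 1 - 2 * m) =
    2 ^ (2 * g - 1) - 2 ^ (g - 1) :=
  partitions_count_odd_general g
end

section
/- Define the genus-4 Schur–Weierstraß polynomial S(u₁,u₂,u₃,u₄) = u₄¹⁰/4725 − u₄⁷u₃/105 + u₂u₄⁵/15 − u₄u₃³ − u₄³u₁/3 + u₂u₃u₄² − u₂² + u₁u₃, and set Z(z) = (z⁷/7, z⁵/5, z³/3, z). Then for all complex z: S(Z(z)) = 0, (∂S/∂u₄)(Z(z)) = 0, and (∂²S/∂u₄²)(Z(z)) = 0. -/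
/-!
As a polynomial in `u₄`, `S(z⁷/7, z⁵/5, z³/3, u₄)` has `z` as a triple root: writing `u₄ = z t`,
`4725 S = z¹⁰ (t - 1)³ (t⁷ + 3t⁶ + 6t⁵ - 5t⁴ - 30t³ - 6t² + 67t - 36)`.
A triple root of a polynomial is a root of its first two derivatives.
-/

/-- The genus-4 Schur–Weierstraß polynomial. -/
noncomputable def S4 (u₁ u₂ u₃ u₄ : ℂ) : ℂ :=
  u₄ ^ 10 / 4725 - u₄ ^ 7 * u₃ / 105 + u₂ * u₄ ^ 5 / 15 - u₄ * u₃ ^ 3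
    - u₄ ^ 3 * u₁ / 3 + u₂ * u₃ * u₄ ^ 2 - u₂ ^ 2 + u₁ * u₃

open Polynomial

namespace Polynomial

variable {𝕜 : Type*} [NontriviallyNormedField 𝕜]

theorem iteratedDeriv_eval (p : 𝕜[X]) (n : ℕ) :
    iteratedDeriv n (fun x => p.eval x) = fun x => (derivative^[n] p).eval x := by
  induction n with
  | zero => simp
  | succ n ih =>
    rw [iteratedDeriv_succ, ih, Function.iterate_succ_apply']
    funext x
    exact Polynomial.deriv _

theorem iteratedDeriv_eval_eq_zero_of_pow_dvd {p : 𝕜[X]} {t : 𝕜} {m n : ℕ}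
    (hp : (X - C t) ^ m ∣ p) (hn : n < m) : iteratedDeriv n (fun x => p.eval x) t = 0 := by
  rw [iteratedDeriv_eval, ← IsRoot, ← dvd_iff_isRoot]
  exact (dvd_pow_self _ (Nat.sub_ne_zero_of_lt hn)).trans
    (pow_sub_dvd_iterate_derivative_of_pow_dvd n hp)

end Polynomial

noncomputable def schurCofactor (z : ℂ) : ℂ[X] :=
  C (1 / 4725) * (X ^ 7 + C (3 * z) * X ^ 6 + C (6 * z ^ 2) * X ^ 5 - C (5 * z ^ 3) * X ^ 4
    - C (30 * z ^ 4) * X ^ 3 - C (6 * z ^ 5) * X ^ 2 + C (67 * z ^ 6) * X - C (36 * z ^ 7))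

theorem S4_abelMap_eq_eval (z u : ℂ) :
    S4 (z ^ 7 / 7) (z ^ 5 / 5) (z ^ 3 / 3) u = ((X - C z) ^ 3 * schurCofactor z).eval u := by
  simp only [S4, schurCofactor, eval_mul, eval_pow, eval_sub, eval_add, eval_X, eval_C]
  ring

theorem genus4_schur_vanishing (z : ℂ) :
    S4 (z ^ 7 / 7) (z ^ 5 / 5) (z ^ 3 / 3) z = 0 ∧
    deriv (fun u₄ => S4 (z ^ 7 / 7) (z ^ 5 / 5) (z ^ 3 / 3) u₄) z = 0 ∧
    iteratedDeriv 2 (fun u₄ => S4 (z ^ 7 / 7) (z ^ 5 / 5) (z ^ 3 / 3) u₄) z = 0 := by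
  have hS : (fun u₄ => S4 (z ^ 7 / 7) (z ^ 5 / 5) (z ^ 3 / 3) u₄) =
      fun u₄ => ((X - C z) ^ 3 * schurCofactor z).eval u₄ :=
    funext (S4_abelMap_eq_eval z)
  have hroot (n : ℕ) (hn : n < 3) :
      iteratedDeriv n (fun u₄ => S4 (z ^ 7 / 7) (z ^ 5 / 5) (z ^ 3 / 3) u₄) z = 0 := by
    rw [hS]
    exact iteratedDeriv_eval_eq_zero_of_pow_dvd (dvd_mul_right _ _) hn
  refine ⟨?_, ?_, hroot 2 (by norm_num)⟩
  · simpa only [iteratedDeriv_zero] using hroot 0 (by norm_num)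
  · simpa only [iteratedDeriv_one] using hroot 1 (by norm_num)
end

section
/- Let e₁, …, e₇ be complex numbers and write 4∏_{k=1}^{7}(z − e_k) = 4z⁷ + λ₆z⁶ + λ₅z⁵ + λ₄z⁴ + … + λ₀. Let {i,j,k} ∪ {j₁,j₂,j₃,j₄} = {1,…,7} be a partition into disjoint sets; let s₁, s₂, s₃ be the elementary symmetric polynomials of e_i, e_j, e_k and S₁, S₂, S₃, S₄ those of e_{j₁}, …, e_{j₄}. Then 4s₁³ + λ₆s₁² − 4s₁s₂ + λ₅s₁ + 4(S₃ + 2s₃ + s₂S₁) − 4s₃ + λ₄ = 0. -/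
theorem genus3_cubic_relation_at_half_period
    (a b c d₁ d₂ d₃ d₄ : ℂ) (lam6 lam5 lam4 lam3 lam2 lam1 lam0 : ℂ)
    (h : ∀ z : ℂ, 4 * ((z - a) * (z - b) * (z - c) *
        (z - d₁) * (z - d₂) * (z - d₃) * (z - d₄)) =
      4 * z ^ 7 + lam6 * z ^ 6 + lam5 * z ^ 5 + lam4 * z ^ 4 + lam3 * z ^ 3 +
        lam2 * z ^ 2 + lam1 * z + lam0)
    (s₁ s₂ s₃ S₁ S₂ S₃ S₄ : ℂ)
    (hs₁ : s₁ = a + b + c) (hs₂ : s₂ = a * b + a * c + b * c) (hs₃ : s₃ = a * b * c)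
    (hS₁ : S₁ = d₁ + d₂ + d₃ + d₄)
    (hS₂ : S₂ = d₁ * d₂ + d₁ * d₃ + d₁ * d₄ + d₂ * d₃ + d₂ * d₄ + d₃ * d₄)
    (hS₃ : S₃ = d₁ * d₂ * d₃ + d₁ * d₂ * d₄ + d₁ * d₃ * d₄ + d₂ * d₃ * d₄)
    (hS₄ : S₄ = d₁ * d₂ * d₃ * d₄) :
    4 * s₁ ^ 3 + lam6 * s₁ ^ 2 - 4 * s₁ * s₂ + lam5 * s₁ +
      4 * (S₃ + 2 * s₃ + s₂ * S₁) - 4 * s₃ + lam4 = 0 := by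
  subst hs₁ hs₂ hs₃ hS₁ hS₂ hS₃ hS₄
  linear_combination -(
    ((35:ℂ)/144 + (a+b+c)*(-7/240) + (a+b+c)^2*(1/720)) * h 0 +
    ((-31:ℂ)/24 + (a+b+c)*(1/6) + (a+b+c)^2*(-1/120)) * h 1 +
    ((137:ℂ)/48 + (a+b+c)*(-19/48) + (a+b+c)^2*(1/48)) * h 2 +
    ((-121:ℂ)/36 + (a+b+c)*(1/2) + (a+b+c)^2*(-1/36)) * h 3 +
    ((107:ℂ)/48 + (a+b+c)*(-17/48) + (a+b+c)^2*(1/48)) * h 4 +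
    ((-19:ℂ)/24 + (a+b+c)*(2/15) + (a+b+c)^2*(-1/120)) * h 5 +
    ((17:ℂ)/144 + (a+b+c)*(-1/48) + (a+b+c)^2*(1/720)) * h 6)
end
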